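/- arXiv:1105.0707 — 8 statements merged into one kernel-verified Lean document; each statement's English description precedes it below -/
import Mathlib

section
/- Let H = (V,E) be a finite simple graph with no isolated vertices and let k ≥ 1 be an integer. Define a CRG Γ as follows: Ag = {c_1,…,c_k}; for each i ∈ {1,…,k}, G_i = {g_i^v : v ∈ V} consists of one goal per vertex of H, and the total goal set G is the disjoint union of G_1,…,G_k; R = E; en(c_i, e) = 1 for every agent c_i and every edge e ∈ E; and req(g_i^v, e) = k if vertex v is incident to edge e, and req(g_i^v, e) = 0 otherwise. Then H has an independent set of size k if and only if the grand coalition Ag is successful in Γ. -/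
/-- A coalitional resource game (CRG). -/
structure CRG (A G R : Type) [DecidableEq A] [DecidableEq G] [DecidableEq R] where
  /-- the finite set of agents -/
  Ag : Finset A
  /-- the finite set of goals -/
  Goals : Finset G
  /-- the finite set of resources -/
  Res : Finset R
  /-- the set of goals any one of which satisfies agent `i` -/
  goalsOf : A → Finset G
  goalsOf_subset : ∀ i, goalsOf i ⊆ Goals
  /-- the endowment function -/
  en : A → R → ℕ
  /-- the requirement function -/
  req : G → R → ℕ

variable {A G R : Type} [DecidableEq A] [DecidableEq G] [DecidableEq R]

/-- Endowment of a coalition. -/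
def CRG.enC (Γ : CRG A G R) (C : Finset A) (r : R) : ℕ := ∑ i ∈ C, Γ.en i r

/-- Requirement of a set of goals. -/
def CRG.reqS (Γ : CRG A G R) (S : Finset G) (r : R) : ℕ := ∑ g ∈ S, Γ.req g r

/-- A goal set `S` satisfies coalition `C` if it meets every member's goal set. -/
def CRG.Satisfies (Γ : CRG A G R) (S : Finset G) (C : Finset A) : Prop :=
  ∀ i ∈ C, (S ∩ Γ.goalsOf i).Nonempty

/-- A goal set `S` is feasible for coalition `C`. -/
def CRG.Feasible (Γ : CRG A G R) (S : Finset G) (C : Finset A) : Prop :=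
  ∀ r ∈ Γ.Res, Γ.reqS S r ≤ Γ.enC C r

/-- `succ Γ C` is the set of nonempty goal sets that satisfy `C` and are feasible for `C`. -/
def CRG.succ (Γ : CRG A G R) (C : Finset A) : Set (Finset G) :=
  {S | S ⊆ Γ.Goals ∧ S.Nonempty ∧ Γ.Satisfies S C ∧ Γ.Feasible S C}

/-- A coalition is successful if some nonempty goal set satisfies it and is feasible for it. -/
def CRG.Successful (Γ : CRG A G R) (C : Finset A) : Prop :=
  (Γ.succ C).Nonempty

/-- The CRG built from a graph `H` and integer `k`: agents are `Fin k`, the goals of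
agent `i` are `g_i^v = (i, v)` for each vertex `v`, resources are the edges of `H`,
every agent is endowed 1 unit of every resource, and goal `(i,v)` requires `k` units
of edge `e` if `v` is incident to `e` and `0` otherwise. -/
def gameOfGraph {V : Type} [Fintype V] [DecidableEq V] (H : SimpleGraph V)
    [DecidableRel H.Adj] (k : ℕ) : CRG (Fin k) (Fin k × V) (Sym2 V) where
  Ag := Finset.univ
  Goals := Finset.univ
  Res := H.edgeFinset
  goalsOf := fun c => Finset.univ.filter (fun p => p.1 = c)
  goalsOf_subset := fun _ => Finset.filter_subset _ _
  en := fun _ _ => 1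
  req := fun p e => if p.2 ∈ e then k else 0

theorem stmt_0 {V : Type} [Fintype V] [DecidableEq V] (H : SimpleGraph V)
    [DecidableRel H.Adj] (k : ℕ) (hk : 1 ≤ k)
    (hiso : ∀ v : V, ∃ w : V, H.Adj v w) :
    (∃ s : Finset V, s.card = k ∧ ∀ v ∈ s, ∀ w ∈ s, v ≠ w → ¬ H.Adj v w) ↔
      (gameOfGraph H k).Successful Finset.univ := by
  have hen : ∀ e : Sym2 V, (gameOfGraph H k).enC Finset.univ e = k := by
    intro e; simp [CRG.enC, gameOfGraph]
  constructor
  · rintro ⟨s, hcard, hind⟩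
    set f : Fin k → V := fun i => (s.equivFin.symm (Fin.cast hcard.symm i)).1 with hf
    have hfs : ∀ i, f i ∈ s := fun i => (s.equivFin.symm _).2
    have hfinj : Function.Injective f := by
      intro i j hij
      have h2 := s.equivFin.symm.injective (Subtype.ext hij)
      exact Fin.cast_injective _ h2
    refine ⟨Finset.univ.image (fun i : Fin k => (i, f i)), ?_, ?_, ?_, ?_⟩
    · intro x _; simp [gameOfGraph]
    · refine Finset.Nonempty.image ?_ _
      exact Finset.univ_nonempty_iff.mpr (Fin.pos_iff_nonempty.mp hk)
    · intro i _
      refine ⟨(i, f i), ?_⟩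
      simp [gameOfGraph]
    · intro e he
      rw [hen]
      have hinjp : Function.Injective (fun i : Fin k => (i, f i)) := by
        intro i j h; exact congrArg Prod.fst h
      have hsum : (gameOfGraph H k).reqS (Finset.univ.image (fun i : Fin k => (i, f i))) e
          = ∑ i : Fin k, (if f i ∈ e then k else 0) := by
        unfold CRG.reqS
        rw [Finset.sum_image (fun a _ b _ h => hinjp h)]
        rfl
      rw [hsum]
      have hcard1 : (Finset.univ.filter (fun i : Fin k => f i ∈ e)).card ≤ 1 := by
        rw [Finset.card_le_one]
        intro i hi j hj
        simp at hi hj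
        by_contra hij
        have hne : f i ≠ f j := fun h => hij (hfinj h)
        have : e = s(f i, f j) := (Sym2.mem_and_mem_iff hne).mp ⟨hi, hj⟩
        have he' : e ∈ H.edgeFinset := he
        have hadj : H.Adj (f i) (f j) := by
          rw [SimpleGraph.mem_edgeFinset, this] at he'
          exact he'
        exact hind _ (hfs i) _ (hfs j) hne hadj
      calc ∑ i : Fin k, (if f i ∈ e then k else 0)
          = (Finset.univ.filter (fun i : Fin k => f i ∈ e)).card * k := by
            rw [Finset.sum_ite, Finset.sum_const, Finset.sum_const_zero, add_zero,
              smul_eq_mul]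
        _ ≤ 1 * k := Nat.mul_le_mul_right k hcard1
        _ = k := one_mul k
  · rintro ⟨S, hSG, hSne, hsat, hfeas⟩
    have key : ∀ p ∈ S, ∀ q ∈ S, p ≠ q → ∀ e ∈ H.edgeFinset,
        ¬ ((p : Fin k × V).2 ∈ e ∧ (q : Fin k × V).2 ∈ e) := by
      rintro p hp q hq hpq e he ⟨h1, h2⟩
      have hle := hfeas e he
      rw [hen] at hle
      have hsub : ({p, q} : Finset (Fin k × V)) ⊆ S := by
        intro x hx
        rcases Finset.mem_insert.mp hx with rfl | hx
        · exact hp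
        · exact Finset.mem_singleton.mp hx ▸ hq
      have h2k : 2 * k ≤ (gameOfGraph H k).reqS S e := by
        calc 2 * k = ∑ g ∈ ({p, q} : Finset (Fin k × V)), (gameOfGraph H k).req g e := by
              rw [Finset.sum_pair hpq]
              simp only [gameOfGraph, if_pos h1, if_pos h2]
              ring
          _ ≤ _ := Finset.sum_le_sum_of_subset hsub
      omega
    have hex : ∀ i : Fin k, ∃ v : V, (i, v) ∈ S := by
      intro i
      obtain ⟨p, hp⟩ := hsat i (Finset.mem_univ i)
      simp only [gameOfGraph, Finset.mem_inter, Finset.mem_filter, Finset.mem_univ,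
        true_and] at hp
      exact ⟨p.2, by rw [show (i, p.2) = p from Prod.ext hp.2.symm rfl]; exact hp.1⟩
    choose v hv using hex
    have hnoedge : ∀ i j : Fin k, (i, v i) ≠ (j, v j) → ∀ e ∈ H.edgeFinset,
        ¬ (v i ∈ e ∧ v j ∈ e) := by
      intro i j hne e he
      exact key _ (hv i) _ (hv j) hne e he
    have hinj : Function.Injective v := by
      intro i j hij
      by_contra hne
      have hpq : ((i, v i) : Fin k × V) ≠ (j, v j) := by
        intro h; exact hne (congrArg Prod.fst h)
      obtain ⟨w, hw⟩ := hiso (v i)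
      have he : s(v i, w) ∈ H.edgeFinset := by
        rw [SimpleGraph.mem_edgeFinset]; exact hw
      exact hnoedge i j hpq _ he ⟨Sym2.mem_mk_left _ _, by rw [← hij]; exact Sym2.mem_mk_left _ _⟩
    refine ⟨Finset.univ.image v, ?_, ?_⟩
    · rw [Finset.card_image_of_injective _ hinj, Finset.card_univ, Fintype.card_fin]
    · intro a ha b hb hab hadj
      simp only [Finset.mem_image, Finset.mem_univ, true_and] at ha hb
      obtain ⟨i, rfl⟩ := ha
      obtain ⟨j, rfl⟩ := hb
      have hpq : ((i, v i) : Fin k × V) ≠ (j, v j) := by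
        intro h; exact hab (congrArg Prod.snd h)
      have he : s(v i, v j) ∈ H.edgeFinset := by
        rw [SimpleGraph.mem_edgeFinset]; exact hadj
      exact hnoedge i j hpq _ he ⟨Sym2.mem_mk_left _ _, Sym2.mem_mk_right _ _⟩
end

section
/- Let Γ be a CRG and let C ⊆ Ag be a nonempty coalition. Construct Γ' from Γ as follows: add one new goal g' (so the goal set becomes G ∪ {g'}) and one new resource r' (so R' = R ∪ {r'}); replace each agent's goal set G_i by G_i ∪ {g'}; set en(i,r') = 1 for i ∈ C and en(i,r') = 0 for i ∉ C; set req(g',r') = |C|, req(g',r) = 0 for every r ∈ R, and req(g,r') = 0 for every g ∈ G; everything else is unchanged. Let G_0 = {g'}. Then (a) G_0 ∈ succ_{Γ'}(C), and (b) C is successful in Γ if and only if there exists G_1 ∈ succ_{Γ'}(C) with req(G_1,r') < req(G_0,r') = |C|. -/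
variable {A G R : Type} [DecidableEq A] [DecidableEq G] [DecidableEq R]

/-- The CRG obtained from `Γ` (relative to a coalition `C`) by adding a new goal `g'`
and a new resource `r'`: each agent's goal set becomes `G_i ∪ {g'}`,
`en i r' = 1` for `i ∈ C` and `0` otherwise, `req g' r' = |C|`, `req g' r = 0` for
`r ∈ R`, and `req g r' = 0` for `g ∈ G`; everything else is unchanged. -/
def game5 (Γ : CRG A G R) (C : Finset A) (g' : G) (r' : R) : CRG A G R where
  Ag := Γ.Ag
  Goals := insert g' Γ.Goals
  Res := insert r' Γ.Res
  goalsOf := fun i => insert g' (Γ.goalsOf i)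
  goalsOf_subset := fun i => Finset.insert_subset_insert _ (Γ.goalsOf_subset i)
  en := fun i r => if r = r' then (if i ∈ C then 1 else 0) else Γ.en i r
  req := fun g r =>
    if g = g' then (if r = r' then C.card else 0)
    else (if r = r' then 0 else Γ.req g r)

theorem stmt_5 (Γ : CRG A G R) (C : Finset A) (g' : G) (r' : R)
    (hg' : g' ∉ Γ.Goals) (hr' : r' ∉ Γ.Res) (hC : C ⊆ Γ.Ag) (hCne : C.Nonempty) :
    ({g'} : Finset G) ∈ (game5 Γ C g' r').succ C ∧
    (game5 Γ C g' r').reqS {g'} r' = C.card ∧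
    (Γ.Successful C ↔
      ∃ S ∈ (game5 Γ C g' r').succ C,
        (game5 Γ C g' r').reqS S r' < (game5 Γ C g' r').reqS {g'} r') := by

  have hreq0 : (game5 Γ C g' r').reqS {g'} r' = C.card := by
    simp [CRG.reqS, game5]
  have henC : (game5 Γ C g' r').enC C r' = C.card := by
    simp [CRG.enC, game5]
  -- reqS in the new game equals old reqS on old resources for S ⊆ old goals
  have hreq_old : ∀ (S : Finset G) (r : R), S ⊆ Γ.Goals → r ∈ Γ.Res →
      (game5 Γ C g' r').reqS S r = Γ.reqS S r := by
    intro S r hS hr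
    apply Finset.sum_congr rfl
    intro g hg
    have hgne : g ≠ g' := fun h => hg' (h ▸ hS hg)
    have hrne : r ≠ r' := fun h => hr' (h ▸ hr)
    simp [game5, hgne, hrne]
  have hen_old : ∀ (r : R), r ∈ Γ.Res → (game5 Γ C g' r').enC C r = Γ.enC C r := by
    intro r hr
    apply Finset.sum_congr rfl
    intro i _
    have hrne : r ≠ r' := fun h => hr' (h ▸ hr)
    simp [game5, hrne]
  have hreq_r' : ∀ (S : Finset G), S ⊆ Γ.Goals → (game5 Γ C g' r').reqS S r' = 0 := by
    intro S hS
    apply Finset.sum_eq_zero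
    intro g hg
    have hgne : g ≠ g' := fun h => hg' (h ▸ hS hg)
    simp [game5, hgne]
  have h1 : ({g'} : Finset G) ∈ (game5 Γ C g' r').succ C := by
    refine ⟨by simp [game5], Finset.singleton_nonempty _, ?_, ?_⟩
    · intro i _
      exact ⟨g', by simp [game5]⟩
    · intro r hr
      rcases Finset.mem_insert.mp hr with h | h
      · subst h; rw [hreq0, henC]
      · have hrne : r ≠ r' := fun hh => hr' (hh ▸ h)
        have : (game5 Γ C g' r').reqS {g'} r = 0 := by simp [CRG.reqS, game5, hrne]
        simp [this]
  refine ⟨h1, hreq0, ?_, ?_⟩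
  · rintro ⟨S, hSg, hSne, hSsat, hSfeas⟩
    refine ⟨S, ⟨hSg.trans (Finset.subset_insert _ _), hSne, ?_, ?_⟩, ?_⟩
    · intro i hi
      obtain ⟨g, hg⟩ := hSsat i hi
      simp only [Finset.mem_inter] at hg
      refine ⟨g, Finset.mem_inter.mpr ⟨hg.1, ?_⟩⟩
      simp [game5, hg.2]
    · intro r hr
      rcases Finset.mem_insert.mp hr with h | h
      · subst h; rw [hreq_r' S hSg]; exact Nat.zero_le _
      · rw [hreq_old S r hSg h, hen_old r h]; exact hSfeas r h
    · rw [hreq_r' S hSg, hreq0]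
      exact Finset.card_pos.mpr hCne
  · rintro ⟨S, ⟨hSg, hSne, hSsat, hSfeas⟩, hlt⟩
    rw [hreq0] at hlt
    have hg'S : g' ∉ S := by
      intro hmem
      have : C.card ≤ (game5 Γ C g' r').reqS S r' := by
        have := Finset.single_le_sum (f := fun g => (game5 Γ C g' r').req g r')
          (fun g _ => Nat.zero_le _) hmem
        simpa [CRG.reqS, game5, hmem] using this
      omega
    have hSsub : S ⊆ Γ.Goals := by
      intro g hg
      rcases Finset.mem_insert.mp (hSg hg) with h | h
      · exact absurd (h ▸ hg) hg'S
      · exact h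
    refine ⟨S, hSsub, hSne, ?_, ?_⟩
    · intro i hi
      obtain ⟨g, hg⟩ := hSsat i hi
      simp only [Finset.mem_inter, game5, Finset.mem_insert] at hg
      rcases hg.2 with h | h
      · exact absurd (h ▸ hg.1) hg'S
      · exact ⟨g, Finset.mem_inter.mpr ⟨hg.1, h⟩⟩
    · intro r hr
      rw [← hreq_old S r hSsub hr, ← hen_old r hr]
      exact hSfeas r (Finset.mem_insert_of_mem hr)
end

section
/- Let Γ be a CRG and let C ⊆ Ag be a nonempty coalition. Construct Γ' from Γ as follows: add one new resource r' (so R' = R ∪ {r'}) and one new goal g' (so the goal set becomes G ∪ {g'}; g' is not added to any G_i); set en(i,r') = |G| for i ∈ C and en(i,r') = 0 for i ∉ C; set req(g,r') = |C| for every g ∈ G and req(g',r') = |G|·|C| + 1; and for each r ∈ R set req(g',r) = N_r, where N_r is any natural number satisfying N_r > en(Ag,r) and N_r > Σ_{g∈G} req(g,r); everything else is unchanged. Let G_0 = {g'}. Then C is successful in Γ if and only if G_0 is not R-Pareto efficient with respect to C in Γ'. -/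
variable {A G R : Type} [DecidableEq A] [DecidableEq G] [DecidableEq R]

/-- `G₀` is R-Pareto efficient w.r.t. coalition `C` in `Γ`: for every `G'' ∈ succ Γ C`,
if some resource requires strictly less for `G''` than for `G₀`, then some resource
requires strictly more for `G''` than for `G₀`. -/
def CRG.RParetoEfficient (Γ : CRG A G R) (C : Finset A) (G₀ : Finset G) : Prop :=
  ∀ G'' ∈ Γ.succ C,
    (∃ r₁ ∈ Γ.Res, Γ.reqS G'' r₁ < Γ.reqS G₀ r₁) →
      (∃ r₂ ∈ Γ.Res, Γ.reqS G₀ r₂ < Γ.reqS G'' r₂)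

/-- The CRG obtained from `Γ` (relative to a coalition `C`) by adding a new resource
`r'` and a new goal `g'` (not added to any agent's goal set):
`en i r' = |G|` for `i ∈ C` and `0` otherwise, `req g r' = |C|` for `g ∈ G`,
`req g' r' = |G|·|C| + 1`, and `req g' r = N r` for `r ∈ R`; else unchanged. -/
def game6 (Γ : CRG A G R) (C : Finset A) (g' : G) (r' : R) (N : R → ℕ) : CRG A G R where
  Ag := Γ.Ag
  Goals := insert g' Γ.Goals
  Res := insert r' Γ.Res
  goalsOf := Γ.goalsOf
  goalsOf_subset := fun i => (Γ.goalsOf_subset i).trans (Finset.subset_insert _ _)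
  en := fun i r => if r = r' then (if i ∈ C then Γ.Goals.card else 0) else Γ.en i r
  req := fun g r =>
    if g = g' then (if r = r' then Γ.Goals.card * C.card + 1 else N r)
    else (if r = r' then C.card else Γ.req g r)

section aux
variable {A G R : Type} [DecidableEq A] [DecidableEq G] [DecidableEq R]

lemma game6_reqS_rp (Γ : CRG A G R) (C : Finset A) (g' : G) (r' : R) (N : R → ℕ)
    (S : Finset G) (hg'S : g' ∉ S) :
    (game6 Γ C g' r' N).reqS S r' = S.card * C.card := by
  unfold CRG.reqS game6
  rw [Finset.sum_congr rfl (fun g hg => ?_), Finset.sum_const, smul_eq_mul]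
  simp only
  rw [if_neg (by rintro rfl; exact hg'S hg), if_pos trivial]

lemma game6_reqS_old (Γ : CRG A G R) (C : Finset A) (g' : G) (r' : R) (N : R → ℕ)
    (S : Finset G) (hg'S : g' ∉ S) (r : R) (hr : r ≠ r') :
    (game6 Γ C g' r' N).reqS S r = Γ.reqS S r := by
  unfold CRG.reqS game6
  refine Finset.sum_congr rfl (fun g hg => ?_)
  simp only
  rw [if_neg (by rintro rfl; exact hg'S hg), if_neg hr]

lemma game6_enC_rp (Γ : CRG A G R) (C : Finset A) (g' : G) (r' : R) (N : R → ℕ) :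
    (game6 Γ C g' r' N).enC C r' = C.card * Γ.Goals.card := by
  unfold CRG.enC game6
  rw [Finset.sum_congr rfl (fun i hi => ?_), Finset.sum_const, smul_eq_mul]
  simp only
  rw [if_pos trivial, if_pos hi]

lemma game6_enC_old (Γ : CRG A G R) (C : Finset A) (g' : G) (r' : R) (N : R → ℕ)
    (r : R) (hr : r ≠ r') :
    (game6 Γ C g' r' N).enC C r = Γ.enC C r := by
  unfold CRG.enC game6
  exact Finset.sum_congr rfl (fun i _ => by simp only; rw [if_neg hr])

lemma game6_reqS_g'_rp (Γ : CRG A G R) (C : Finset A) (g' : G) (r' : R) (N : R → ℕ) :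
    (game6 Γ C g' r' N).reqS {g'} r' = Γ.Goals.card * C.card + 1 := by
  unfold CRG.reqS game6
  rw [Finset.sum_singleton]
  simp

lemma game6_reqS_g'_old (Γ : CRG A G R) (C : Finset A) (g' : G) (r' : R) (N : R → ℕ)
    (r : R) (hr : r ≠ r') :
    (game6 Γ C g' r' N).reqS {g'} r = N r := by
  unfold CRG.reqS game6
  rw [Finset.sum_singleton]
  simp [hr]

end aux

theorem stmt_6 (Γ : CRG A G R) (C : Finset A) (g' : G) (r' : R) (N : R → ℕ)
    (hg' : g' ∉ Γ.Goals) (hr' : r' ∉ Γ.Res) (hC : C ⊆ Γ.Ag) (hCne : C.Nonempty)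
    (hN : ∀ r ∈ Γ.Res, Γ.enC Γ.Ag r < N r ∧ (∑ g ∈ Γ.Goals, Γ.req g r) < N r) :
    Γ.Successful C ↔ ¬ (game6 Γ C g' r' N).RParetoEfficient C {g'} := by
  constructor
  · rintro ⟨S, hS, hSne, hsat, hfeas⟩ hPE
    have hg'S : g' ∉ S := fun h => hg' (hS h)
    have hmem : S ∈ (game6 Γ C g' r' N).succ C := by
      refine ⟨hS.trans (Finset.subset_insert _ _), hSne, hsat, ?_⟩
      intro r hr
      rcases Finset.mem_insert.mp hr with h | h
      · rw [h, game6_reqS_rp Γ C g' r' N S hg'S, game6_enC_rp]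
        rw [mul_comm]
        exact Nat.mul_le_mul_left _ (Finset.card_le_card hS)
      · have hne : r ≠ r' := by rintro rfl; exact hr' h
        rw [game6_reqS_old Γ C g' r' N S hg'S r hne, game6_enC_old Γ C g' r' N r hne]
        exact hfeas r h
    have h1 : ∃ r₁ ∈ (game6 Γ C g' r' N).Res,
        (game6 Γ C g' r' N).reqS S r₁ < (game6 Γ C g' r' N).reqS {g'} r₁ := by
      refine ⟨r', Finset.mem_insert_self _ _, ?_⟩
      rw [game6_reqS_rp Γ C g' r' N S hg'S, game6_reqS_g'_rp]
      exact Nat.lt_succ_of_le (Nat.mul_le_mul_right _ (Finset.card_le_card hS))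
    obtain ⟨r₂, hr₂, hlt⟩ := hPE S hmem h1
    rcases Finset.mem_insert.mp hr₂ with h | h
    · rw [h, game6_reqS_rp Γ C g' r' N S hg'S, game6_reqS_g'_rp] at hlt
      exact absurd hlt (not_lt.mpr (Nat.le_succ_of_le
        (Nat.mul_le_mul_right _ (Finset.card_le_card hS))))
    · have hne : r₂ ≠ r' := by rintro rfl; exact hr' h
      rw [game6_reqS_old Γ C g' r' N S hg'S r₂ hne, game6_reqS_g'_old Γ C g' r' N r₂ hne] at hlt
      have : Γ.reqS S r₂ ≤ ∑ g ∈ Γ.Goals, Γ.req g r₂ :=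
        Finset.sum_le_sum_of_subset hS
      exact absurd hlt (not_lt.mpr (le_of_lt (lt_of_le_of_lt this (hN r₂ h).2)))
  · intro hnPE
    rw [CRG.RParetoEfficient] at hnPE
    push_neg at hnPE
    obtain ⟨S, hmem, _, _⟩ := hnPE
    obtain ⟨hSsub, hSne, hsat, hfeas⟩ := hmem
    have hg'S : g' ∉ S := by
      intro hg'S
      have := hfeas r' (Finset.mem_insert_self _ _)
      rw [game6_enC_rp] at this
      have hge : (game6 Γ C g' r' N).req g' r' ≤ (game6 Γ C g' r' N).reqS S r' :=
        Finset.single_le_sum (f := fun g => (game6 Γ C g' r' N).req g r')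
          (fun g _ => Nat.zero_le _) hg'S
      have : (game6 Γ C g' r' N).req g' r' ≤ C.card * Γ.Goals.card := le_trans hge this
      have hreq : (game6 Γ C g' r' N).req g' r' = Γ.Goals.card * C.card + 1 := by
        simp [game6]
      rw [hreq, mul_comm Γ.Goals.card C.card] at this
      omega
    have hSG : S ⊆ Γ.Goals := fun g hg =>
      (Finset.mem_insert.mp (hSsub hg)).resolve_left (by rintro rfl; exact hg'S hg)
    refine ⟨S, hSG, hSne, hsat, ?_⟩
    intro r hr
    have hne : r ≠ r' := by rintro rfl; exact hr' hr
    have := hfeas r (Finset.mem_insert_of_mem hr)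
    rwa [game6_reqS_old Γ C g' r' N S hg'S r hne, game6_enC_old Γ C g' r' N r hne] at this
end

section
/- Let Γ be a CRG and let C ⊆ Ag be a nonempty coalition. Construct Γ' from Γ by adding one new resource r' (so R' = R ∪ {r'}), with en(i,r') = |G| for i ∈ C and en(i,r') = 0 for i ∉ C, and req(g,r') = |C| for every g ∈ G; everything else is unchanged. Define the resource bound b : R' → ℕ by b(r) = 1 for every r ∈ R and b(r') = |C| − 1. Then C is successful in Γ if and only if succ_{Γ'}(C) ≠ ∅ and no goal set in succ_{Γ'}(C) respects b. -/
variable {A G R : Type} [DecidableEq A] [DecidableEq G] [DecidableEq R]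

/-- The CRG obtained from `Γ` by adding one new resource `r'` with endowments `e i`
and requirements `q g` on the new resource, everything else unchanged. -/
def CRG.addRes (Γ : CRG A G R) (r' : R) (e : A → ℕ) (q : G → ℕ) : CRG A G R :=
  { Γ with
    Res := insert r' Γ.Res
    en := fun i r => if r = r' then e i else Γ.en i r
    req := fun g r => if r = r' then q g else Γ.req g r }

/-- A goal set `S` respects a resource bound `b` if its requirement of each resource
of the game is at most the bound. -/
def CRG.Respects (Γ : CRG A G R) (S : Finset G) (b : R → ℕ) : Prop :=
  ∀ r ∈ Γ.Res, Γ.reqS S r ≤ b r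

theorem stmt_7 (Γ : CRG A G R) (C : Finset A) (r' : R)
    (hr' : r' ∉ Γ.Res) (hC : C ⊆ Γ.Ag) (hCne : C.Nonempty) :
    Γ.Successful C ↔
      ((Γ.addRes r' (fun i => if i ∈ C then Γ.Goals.card else 0) (fun _ => C.card)).succ C).Nonempty ∧
        ∀ S ∈ (Γ.addRes r' (fun i => if i ∈ C then Γ.Goals.card else 0) (fun _ => C.card)).succ C,
          ¬ (Γ.addRes r' (fun i => if i ∈ C then Γ.Goals.card else 0) (fun _ => C.card)).Respects S
              (fun r => if r = r' then C.card - 1 else 1) := by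

  set Γ' := Γ.addRes r' (fun i => if i ∈ C then Γ.Goals.card else 0) (fun _ => C.card) with hG
  have hreq_old : ∀ (S : Finset G) (r : R), r ≠ r' → Γ'.reqS S r = Γ.reqS S r := by
    intro S r hne; simp [CRG.reqS, CRG.addRes, hne, hG]
  have hen_old : ∀ (r : R), r ≠ r' → Γ'.enC C r = Γ.enC C r := by
    intro r hne; simp [CRG.enC, CRG.addRes, hne, hG]
  have hreq_new : ∀ (S : Finset G), Γ'.reqS S r' = S.card * C.card := by
    intro S; simp [CRG.reqS, CRG.addRes, hG, Finset.sum_const, smul_eq_mul]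
  have hen_new : Γ'.enC C r' = C.card * Γ.Goals.card := by
    simp [CRG.enC, CRG.addRes, hG, Finset.sum_ite_mem, Finset.sum_const, smul_eq_mul]
  have hRes : Γ'.Res = insert r' Γ.Res := rfl
  have hGoals : Γ'.Goals = Γ.Goals := rfl
  have hSat : ∀ S : Finset G, Γ'.Satisfies S C ↔ Γ.Satisfies S C := fun S => Iff.rfl
  have hsucc : Γ'.succ C = Γ.succ C := by
    ext S
    simp only [CRG.succ, Set.mem_setOf_eq, hGoals, hSat]
    constructor
    · rintro ⟨h1, h2, h3, h4⟩
      refine ⟨h1, h2, h3, ?_⟩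
      intro r hr
      have hne : r ≠ r' := fun h => hr' (h ▸ hr)
      have := h4 r (hRes ▸ Finset.mem_insert_of_mem hr)
      rwa [hreq_old S r hne, hen_old r hne] at this
    · rintro ⟨h1, h2, h3, h4⟩
      refine ⟨h1, h2, h3, ?_⟩
      intro r hr
      rcases Finset.mem_insert.mp (hRes ▸ hr) with h | h
      · subst h
        rw [hreq_new, hen_new, mul_comm]
        exact Nat.mul_le_mul_left _ (Finset.card_le_card h1)
      · have hne : r ≠ r' := fun he => hr' (he ▸ h)
        rw [hreq_old S r hne, hen_old r hne]
        exact h4 r h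
  rw [hsucc]
  constructor
  · intro h
    refine ⟨h, ?_⟩
    intro S hS hresp
    have hSne : S.Nonempty := hS.2.1
    have hb := hresp r' (by rw [hRes]; exact Finset.mem_insert_self _ _)
    rw [hreq_new] at hb
    simp only [if_pos] at hb
    have h1 : 0 < S.card := Finset.card_pos.mpr hSne
    have h2 : 0 < C.card := Finset.card_pos.mpr hCne
    have h3 : C.card ≤ S.card * C.card := Nat.le_mul_of_pos_left _ h1
    omega
  · rintro ⟨h, -⟩
    exact h
end

section
/- Let Γ be a CRG and let C ⊆ Ag be a nonempty coalition. Construct Γ' from Γ by adding one new resource r' (so R' = R ∪ {r'}), with en(i,r') = |G| for i ∈ C and en(i,r') = 0 for i ∉ C, and req(g,r') = |C| for every g ∈ G; everything else is unchanged. Then succ_Γ(C) = succ_{Γ'}(C). -/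
variable {A G R : Type} [DecidableEq A] [DecidableEq G] [DecidableEq R]

theorem stmt_8 (Γ : CRG A G R) (C : Finset A) (r' : R)
    (hr' : r' ∉ Γ.Res) (hC : C ⊆ Γ.Ag) (hCne : C.Nonempty) :
    Γ.succ C =
      (Γ.addRes r' (fun i => if i ∈ C then Γ.Goals.card else 0) (fun _ => C.card)).succ C := by
  ext S
  simp only [CRG.succ, CRG.addRes, Set.mem_setOf_eq]
  constructor
  · rintro ⟨hSG, hSne, hsat, hfeas⟩
    refine ⟨hSG, hSne, hsat, ?_⟩
    intro r hr
    simp only [CRG.reqS, CRG.enC] at *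
    rcases Finset.mem_insert.mp hr with rfl | hr
    · simp only [if_pos rfl]
      calc ∑ g ∈ S, C.card = S.card * C.card := by
              rw [Finset.sum_const, smul_eq_mul]
        _ ≤ Γ.Goals.card * C.card :=
              Nat.mul_le_mul_right _ (Finset.card_le_card hSG)
        _ = ∑ i ∈ C, Γ.Goals.card := by rw [Finset.sum_const, smul_eq_mul, mul_comm]
        _ = ∑ i ∈ C, (if i ∈ C then Γ.Goals.card else 0) := by
              apply Finset.sum_congr rfl; intro i hi; rw [if_pos hi]
    · have hne : r ≠ r' := fun h => hr' (h ▸ hr)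
      simp only [if_neg hne]
      exact hfeas r hr
  · rintro ⟨hSG, hSne, hsat, hfeas⟩
    refine ⟨hSG, hSne, hsat, ?_⟩
    intro r hr
    have hne : r ≠ r' := fun h => hr' (h ▸ hr)
    have := hfeas r (Finset.mem_insert_of_mem hr)
    simpa only [CRG.reqS, CRG.enC, CRG.addRes, if_neg hne] using this
end

section
/- Let Γ be a CRG and let C ⊆ Ag be a nonempty coalition. Construct Γ' from Γ by adding one new resource r' (so R' = R ∪ {r'}), with en(i,r') = |G| for i ∈ C and en(i,r') = 0 for i ∉ C, and req(g,r') = |C| for every g ∈ G; everything else is unchanged. Define the resource bound b : R' → ℕ by b(r') = |G|·|C| and, for each r ∈ R, b(r) = M_r where M_r is any natural number with M_r ≥ Σ_{g∈G} req(g,r). Then C is successful in Γ if and only if there exist G_1, G_2 ∈ succ_{Γ'}(C) such that cgs(G_1,G_2,b) fails. -/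
variable {A G R : Type} [DecidableEq A] [DecidableEq G] [DecidableEq R]

/-- `cgs G₁ G₂ b`: the goal sets `G₁` and `G₂` are in conflict w.r.t. the resource
bound `b`: each respects `b` individually but their union does not. -/
def CRG.Cgs (Γ : CRG A G R) (G₁ G₂ : Finset G) (b : R → ℕ) : Prop :=
  Γ.Respects G₁ b ∧ Γ.Respects G₂ b ∧ ¬ Γ.Respects (G₁ ∪ G₂) b

theorem stmt_9 (Γ : CRG A G R) (C : Finset A) (r' : R) (M : R → ℕ)
    (hr' : r' ∉ Γ.Res) (hC : C ⊆ Γ.Ag) (hCne : C.Nonempty)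
    (hM : ∀ r ∈ Γ.Res, (∑ g ∈ Γ.Goals, Γ.req g r) ≤ M r) :
    Γ.Successful C ↔
      ∃ G₁ ∈ (Γ.addRes r' (fun i => if i ∈ C then Γ.Goals.card else 0) (fun _ => C.card)).succ C,
        ∃ G₂ ∈ (Γ.addRes r' (fun i => if i ∈ C then Γ.Goals.card else 0) (fun _ => C.card)).succ C,
          ¬ (Γ.addRes r' (fun i => if i ∈ C then Γ.Goals.card else 0) (fun _ => C.card)).Cgs G₁ G₂
              (fun r => if r = r' then Γ.Goals.card * C.card else M r) := by
  set Γ' := Γ.addRes r' (fun i => if i ∈ C then Γ.Goals.card else 0) (fun _ => C.card) with hΓ'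
  have hRes : Γ'.Res = insert r' Γ.Res := rfl
  have hGoals : Γ'.Goals = Γ.Goals := rfl
  have hen : ∀ i r, r ∈ Γ.Res → Γ'.en i r = Γ.en i r := by
    intro i r hr
    have : r ≠ r' := fun h => hr' (h ▸ hr)
    simp [hΓ', CRG.addRes, this]
  have hreq : ∀ g r, r ∈ Γ.Res → Γ'.req g r = Γ.req g r := by
    intro g r hr
    have : r ≠ r' := fun h => hr' (h ▸ hr)
    simp [hΓ', CRG.addRes, this]
  have hreqS : ∀ S r, r ∈ Γ.Res → Γ'.reqS S r = Γ.reqS S r := by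
    intro S r hr
    exact Finset.sum_congr rfl (fun g _ => hreq g r hr)
  have henC : ∀ r, r ∈ Γ.Res → Γ'.enC C r = Γ.enC C r := by
    intro r hr
    exact Finset.sum_congr rfl (fun i _ => hen i r hr)
  have hreqS' : ∀ S : Finset G, Γ'.reqS S r' = S.card * C.card := by
    intro S
    simp [CRG.reqS, hΓ', CRG.addRes, Finset.sum_const, Nat.smul_one_eq_cast]
  have henC' : Γ'.enC C r' = C.card * Γ.Goals.card := by
    simp [CRG.enC, hΓ', CRG.addRes, Finset.sum_ite_mem, Finset.inter_self]
  -- succ equivalence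
  have hsucc : ∀ S, S ∈ Γ'.succ C ↔ S ∈ Γ.succ C := by
    intro S
    constructor
    · rintro ⟨h1, h2, h3, h4⟩
      exact ⟨h1, h2, h3, fun r hr => by
        have := h4 r (by rw [hRes]; exact Finset.mem_insert_of_mem hr)
        rwa [hreqS S r hr, henC r hr] at this⟩
    · rintro ⟨h1, h2, h3, h4⟩
      refine ⟨h1, h2, h3, fun r hr => ?_⟩
      rw [hRes] at hr
      rcases Finset.mem_insert.mp hr with h | h
      · subst h
        rw [hreqS' S, henC']
        calc S.card * C.card ≤ Γ.Goals.card * C.card :=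
              Nat.mul_le_mul_right _ (Finset.card_le_card h1)
          _ = C.card * Γ.Goals.card := Nat.mul_comm _ _
      · rw [hreqS S r h, henC r h]; exact h4 r h
  -- any subset of goals respects b
  have hresp : ∀ S : Finset G, S ⊆ Γ.Goals →
      Γ'.Respects S (fun r => if r = r' then Γ.Goals.card * C.card else M r) := by
    intro S hS r hr
    rw [hRes] at hr
    rcases Finset.mem_insert.mp hr with h | h
    · subst h
      simp only [if_pos rfl]
      rw [hreqS' S]
      exact Nat.mul_le_mul_right _ (Finset.card_le_card hS)
    · have hne : r ≠ r' := fun he => hr' (he ▸ h)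
      simp only [if_neg hne]
      rw [hreqS S r h]
      exact le_trans (Finset.sum_le_sum_of_subset hS) (hM r h)
  constructor
  · rintro ⟨S, hS⟩
    refine ⟨S, (hsucc S).mpr hS, S, (hsucc S).mpr hS, ?_⟩
    rintro ⟨-, -, hbad⟩
    exact hbad (by rw [Finset.union_self]; exact hresp S hS.1)
  · rintro ⟨G₁, hG₁, -, -, -⟩
    exact ⟨G₁, (hsucc G₁).mp hG₁⟩
end

section
/- Let H = (V,E) be a finite simple graph and let k ≥ 1 be an integer. Define a CRG Γ as follows: Ag = V; R = E; G = {g} is a single goal; G_v = {g} for every agent v ∈ V; req(g,e) = k − 1 for every edge e ∈ E; and en(v,e) = 0 if vertex v is incident to edge e and en(v,e) = 1 otherwise. Then H has an independent set of size k if and only if Γ contains a successful coalition of size exactly k. -/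
variable {A G R : Type} [DecidableEq A] [DecidableEq G] [DecidableEq R]

/-- The CRG built from a graph `H` and integer `k`: agents are the vertices,
resources are the edges, there is a single goal `g` which satisfies every agent,
`req g e = k - 1` for every edge `e`, and `en v e = 0` if `v` is incident to `e`
and `1` otherwise. -/
def game10 {V : Type} [Fintype V] [DecidableEq V] (H : SimpleGraph V)
    [DecidableRel H.Adj] (k : ℕ) : CRG V Unit (Sym2 V) where
  Ag := Finset.univ
  Goals := {()}
  Res := H.edgeFinset
  goalsOf := fun _ => {()}
  goalsOf_subset := fun _ => le_refl _
  en := fun v e => if v ∈ e then 0 else 1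
  req := fun _ _ => k - 1

lemma enC_game10 {V : Type} [Fintype V] [DecidableEq V] (H : SimpleGraph V)
    [DecidableRel H.Adj] (k : ℕ) (C : Finset V) (e : Sym2 V) :
    (game10 H k).enC C e = (C.filter (fun v => v ∉ e)).card := by
  unfold CRG.enC game10
  rw [Finset.card_filter]
  apply Finset.sum_congr rfl
  intro v _
  by_cases h : v ∈ e <;> simp [h]

theorem stmt_10 {V : Type} [Fintype V] [DecidableEq V] (H : SimpleGraph V)
    [DecidableRel H.Adj] (k : ℕ) (hk : 1 ≤ k) :
    (∃ s : Finset V, s.card = k ∧ ∀ v ∈ s, ∀ w ∈ s, v ≠ w → ¬ H.Adj v w) ↔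
      ∃ C : Finset V, C.card = k ∧ (game10 H k).Successful C := by
  constructor
  · rintro ⟨s, hcard, hind⟩
    refine ⟨s, hcard, ⟨{()}, ?_, Finset.singleton_nonempty _, ?_, ?_⟩⟩
    · simp [game10]
    · intro i _; simp [game10]
    · intro e he
      have hreq : (game10 H k).reqS {()} e = k - 1 := by simp [CRG.reqS, game10]
      rw [hreq, enC_game10]
      simp only [game10, SimpleGraph.mem_edgeFinset] at he
      induction e using Sym2.ind with
      | _ a b =>
        have hadj : H.Adj a b := (SimpleGraph.mem_edgeSet H).mp he
        -- at most one of a, b is in s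
        have hfil : s.filter (fun v => v ∈ s(a, b)) ⊆ {a, b} := by
          intro v hv
          simp only [Finset.mem_filter, Sym2.mem_iff] at hv
          simp [hv.2]
        have hone : (s.filter (fun v => v ∈ s(a, b))).card ≤ 1 := by
          by_cases ha : a ∈ s
          · have hb : b ∉ s := fun hb => hind a ha b hb hadj.ne hadj
            have hsub : s.filter (fun v => v ∈ s(a, b)) ⊆ {a} := by
              intro v hv
              simp only [Finset.mem_filter, Sym2.mem_iff] at hv
              rcases hv.2 with rfl | rfl
              · simp
              · exact absurd hv.1 hb
            simpa using Finset.card_le_card hsub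
          · have hsub : s.filter (fun v => v ∈ s(a, b)) ⊆ {b} := by
              intro v hv
              simp only [Finset.mem_filter, Sym2.mem_iff] at hv
              rcases hv.2 with rfl | rfl
              · exact absurd hv.1 ha
              · simp
            simpa using Finset.card_le_card hsub
        have := Finset.card_filter_add_card_filter_not
          (p := fun v => v ∈ s(a, b)) (s := s)
        omega
  · rintro ⟨C, hcard, ⟨S, hS, hSne, _, hfeas⟩⟩
    refine ⟨C, hcard, ?_⟩
    intro v hv w hw hvw hadj
    have hSeq : S = {()} := by
      apply Finset.eq_of_subset_of_card_le hS
      simpa [game10] using Finset.card_pos.mpr hSne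
    have he : s(v, w) ∈ (game10 H k).Res := by
      simp [game10, SimpleGraph.mem_edgeFinset, hadj]
    have := hfeas _ he
    rw [hSeq] at this
    have hreq : (game10 H k).reqS {()} s(v, w) = k - 1 := by simp [CRG.reqS, game10]
    rw [hreq, enC_game10] at this
    have hsub : C.filter (fun u => u ∉ s(v, w)) ⊆ (C.erase v).erase w := by
      intro u hu
      simp only [Finset.mem_filter, Sym2.mem_iff, not_or] at hu
      exact Finset.mem_erase.mpr ⟨hu.2.2, Finset.mem_erase.mpr ⟨hu.2.1, hu.1⟩⟩
    have hle : (C.filter (fun u => u ∉ s(v, w))).card ≤ k - 2 := by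
      have h1 := Finset.card_le_card hsub
      have h2 : ((C.erase v).erase w).card = k - 2 := by
        rw [Finset.card_erase_of_mem (Finset.mem_erase.mpr ⟨Ne.symm hvw, hw⟩),
          Finset.card_erase_of_mem hv, hcard]
        omega
      omega
    have hk2 : 2 ≤ k := by
      have : 2 ≤ C.card := Finset.one_lt_card.mpr ⟨v, hv, w, hw, hvw⟩
      omega
    omega
end

section
/- Let Γ be a CRG and let k ≥ 1 be an integer. Then Γ contains a successful coalition of size exactly k if and only if there exist functions x : G → {0,1} and y : Ag → {0,1} such that: Σ_{i∈Ag} y(i) = k; for every agent i ∈ Ag, Σ_{g∈G_i} x(g) ≥ y(i); and for every resource r ∈ R, Σ_{g∈G} x(g)·req(g,r) ≤ Σ_{i∈Ag} y(i)·en(i,r). -/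
variable {A G R : Type} [DecidableEq A] [DecidableEq G] [DecidableEq R]

theorem stmt_11 (Γ : CRG A G R) (k : ℕ) (hk : 1 ≤ k) :
    (∃ C : Finset A, C ⊆ Γ.Ag ∧ C.card = k ∧ Γ.Successful C) ↔
      ∃ x : G → ℕ, ∃ y : A → ℕ,
        (∀ g : G, x g ≤ 1) ∧ (∀ i : A, y i ≤ 1) ∧
        (∑ i ∈ Γ.Ag, y i) = k ∧
        (∀ i ∈ Γ.Ag, y i ≤ ∑ g ∈ Γ.goalsOf i, x g) ∧
        (∀ r ∈ Γ.Res, (∑ g ∈ Γ.Goals, x g * Γ.req g r) ≤ ∑ i ∈ Γ.Ag, y i * Γ.en i r) := by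

  constructor
  · rintro ⟨C, hCAg, hCk, S, hS, hSne, hsat, hfeas⟩
    refine ⟨fun g => if g ∈ S then 1 else 0, fun i => if i ∈ C then 1 else 0,
      fun g => by dsimp only; split <;> simp, fun i => by dsimp only; split <;> simp, ?_, ?_, ?_⟩
    · rw [Finset.sum_ite_mem, Finset.inter_eq_right.mpr hCAg, Finset.card_eq_sum_ones] at *
      omega
    · intro i hi
      dsimp only
      split
      · next hiC =>
        obtain ⟨g, hg⟩ := hsat i hiC
        simp only [Finset.mem_inter] at hg
        calc 1 = ∑ g' ∈ {g}, if g' ∈ S then 1 else 0 := by simp [hg.1]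
          _ ≤ _ := Finset.sum_le_sum_of_subset (Finset.singleton_subset_iff.mpr hg.2)
      · exact Nat.zero_le _
    · intro r hr
      have h1 : (∑ g ∈ Γ.Goals, (if g ∈ S then 1 else 0) * Γ.req g r) = Γ.reqS S r := by
        rw [CRG.reqS]
        simp only [ite_mul, one_mul, zero_mul]
        rw [Finset.sum_ite_mem, Finset.inter_eq_right.mpr hS]
      have h2 : (∑ i ∈ Γ.Ag, (if i ∈ C then 1 else 0) * Γ.en i r) = Γ.enC C r := by
        rw [CRG.enC]
        simp only [ite_mul, one_mul, zero_mul]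
        rw [Finset.sum_ite_mem, Finset.inter_eq_right.mpr hCAg]
      rw [h1, h2]
      exact hfeas r hr
  · rintro ⟨x, y, hx1, hy1, hysum, hcov, hres⟩
    refine ⟨Γ.Ag.filter (fun i => y i = 1), Finset.filter_subset _ _, ?_, ?_⟩
    · rw [Finset.card_filter]
      rw [← hysum]
      apply Finset.sum_congr rfl
      intro i hi
      have := hy1 i
      split <;> omega
    · refine ⟨Γ.Goals.filter (fun g => x g = 1), Finset.filter_subset _ _, ?_, ?_, ?_⟩
      · -- nonempty
        have : ∃ i ∈ Γ.Ag, y i = 1 := by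
          by_contra h
          push_neg at h
          have : (∑ i ∈ Γ.Ag, y i) = 0 := Finset.sum_eq_zero (fun i hi => by
            have := hy1 i; have := h i hi; omega)
          omega
        obtain ⟨i, hi, hyi⟩ := this
        have hc := hcov i hi
        rw [hyi] at hc
        have : ∃ g ∈ Γ.goalsOf i, x g = 1 := by
          by_contra h
          push_neg at h
          have : (∑ g ∈ Γ.goalsOf i, x g) = 0 := Finset.sum_eq_zero (fun g hg => by
            have := hx1 g; have := h g hg; omega)
          omega
        obtain ⟨g, hg, hxg⟩ := this
        exact ⟨g, Finset.mem_filter.mpr ⟨Γ.goalsOf_subset i hg, hxg⟩⟩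
      · -- satisfies
        intro i hi
        have hiAg : i ∈ Γ.Ag := (Finset.mem_filter.mp hi).1
        have hyi : y i = 1 := (Finset.mem_filter.mp hi).2
        have hc := hcov i hiAg
        rw [hyi] at hc
        have : ∃ g ∈ Γ.goalsOf i, x g = 1 := by
          by_contra h
          push_neg at h
          have : (∑ g ∈ Γ.goalsOf i, x g) = 0 := Finset.sum_eq_zero (fun g hg => by
            have := hx1 g; have := h g hg; omega)
          omega
        obtain ⟨g, hg, hxg⟩ := this
        exact ⟨g, Finset.mem_inter.mpr
          ⟨Finset.mem_filter.mpr ⟨Γ.goalsOf_subset i hg, hxg⟩, hg⟩⟩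
      · -- feasible
        intro r hr
        have h1 : Γ.reqS (Γ.Goals.filter (fun g => x g = 1)) r
            ≤ ∑ g ∈ Γ.Goals, x g * Γ.req g r := by
          rw [CRG.reqS, Finset.sum_filter]
          apply Finset.sum_le_sum
          intro g _
          split
          · next h => rw [h, one_mul]
          · exact Nat.zero_le _
        have h2 : (∑ i ∈ Γ.Ag, y i * Γ.en i r)
            = Γ.enC (Γ.Ag.filter (fun i => y i = 1)) r := by
          rw [CRG.enC, Finset.sum_filter]
          apply Finset.sum_congr rfl
          intro i hi
          have := hy1 i
          split
          · next h => rw [h, one_mul]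
          · next h => interval_cases h' : y i <;> simp_all
        calc _ ≤ _ := h1
          _ ≤ _ := hres r hr
          _ = _ := h2
end
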